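/- Let r > 0, let f : ℝ² → ℝ be a positive twice continuously differentiable function, and let u, v : ℝ → ℝ be twice differentiable with (u̇, v̇) ≠ (0,0). For γ(t) = ψ(u(t), v(t)), define the unit normal n(t) = (1/‖γ̇‖)·(−v̇ cosh(u/r)·ψ_u + (u̇/cosh(u/r))·ψ_v) and the gradient vector ∇f = f_u·ψ_u + (f_v/cosh²(u/r))·ψ_v, where ψ_u = (sinh(u/r)cosh(v/r), sinh(u/r)sinh(v/r), cosh(u/r)) and ψ_v = (cosh(u/r)sinh(v/r), cosh(u/r)cosh(v/r), 0). Then γ satisfies the Euler–Lagrange equations of the functional ∫ f(u,v)‖γ̇‖ dt if and only if its geodesic curvature κ in H²(r) satisfies κ = −⟨n, ∇f⟩₁/f for all t. -/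

import Mathlib

noncomputable section
open Real

/-- Minkowski inner product of `E₁³`. -/
def mink3 (X Y : ℝ × ℝ × ℝ) : ℝ := -(X.1 * Y.1) + X.2.1 * Y.2.1 + X.2.2 * Y.2.2

/-- Speed `‖γ̇‖ = √(−ẋ² + ẏ² + ż²)` of a curve `(x,y,z)` in `E₁³`. -/
def speed3 (x y z : ℝ → ℝ) (t : ℝ) : ℝ :=
  Real.sqrt (-(deriv x t) ^ 2 + (deriv y t) ^ 2 + (deriv z t) ^ 2)

/-- Geodesic curvature of the curve `(x,y,z)` in `H²(r)`. -/
def kappaH2 (r : ℝ) (x y z : ℝ → ℝ) (t : ℝ) : ℝ :=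
  -(x t * (deriv (deriv y) t * deriv z t - deriv y t * deriv (deriv z) t)
      - y t * (deriv (deriv x) t * deriv z t - deriv x t * deriv (deriv z) t)
      + z t * (deriv (deriv x) t * deriv y t - deriv x t * deriv (deriv y) t))
    / (r * (speed3 x y z t) ^ 3)

/-- First component of `γ(t) = ψ(u(t), v(t))` (semi-geodesic parametrization). -/
def gX (r : ℝ) (u v : ℝ → ℝ) (t : ℝ) : ℝ :=
  r * Real.cosh (u t / r) * Real.cosh (v t / r)

/-- Second component of `γ(t) = ψ(u(t), v(t))`. -/
def gY (r : ℝ) (u v : ℝ → ℝ) (t : ℝ) : ℝ :=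
  r * Real.cosh (u t / r) * Real.sinh (v t / r)

/-- Third component of `γ(t) = ψ(u(t), v(t))`. -/
def gZ (r : ℝ) (u v : ℝ → ℝ) (t : ℝ) : ℝ :=
  r * Real.sinh (u t / r)

/-- `‖γ̇‖` in semi-geodesic coordinates: `√(u̇² + cosh²(u/r) v̇²)`. -/
def speedSG (r : ℝ) (u v : ℝ → ℝ) (t : ℝ) : ℝ :=
  Real.sqrt ((deriv u t) ^ 2 + (Real.cosh (u t / r)) ^ 2 * (deriv v t) ^ 2)

/-- Geodesic curvature of `γ(t) = ψ(u(t), v(t))` in `H²(r)`. -/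
def kappaSG (r : ℝ) (u v : ℝ → ℝ) (t : ℝ) : ℝ :=
  kappaH2 r (gX r u v) (gY r u v) (gZ r u v) t

/-- The Euler–Lagrange equations of the functional `∫ f(u,v) ‖γ̇‖ dt` in
semi-geodesic coordinates. -/
def EulerLagrange (r : ℝ) (f : ℝ → ℝ → ℝ) (u v : ℝ → ℝ) : Prop :=
  ∀ t : ℝ,
    deriv (fun a => f a (v t)) (u t) * speedSG r u v t
        + f (u t) (v t) * Real.sinh (u t / r) * Real.cosh (u t / r) * (deriv v t) ^ 2
          / (r * speedSG r u v t)
      = deriv (fun s => f (u s) (v s) * deriv u s / speedSG r u v s) t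
    ∧ deriv (fun b => f (u t) b) (v t) * speedSG r u v t
      = deriv (fun s =>
          f (u s) (v s) * deriv v s * (Real.cosh (u s / r)) ^ 2 / speedSG r u v s) t

/-- `ψ_u(u,v)`. -/
def psiU (r a b : ℝ) : ℝ × ℝ × ℝ :=
  (Real.sinh (a / r) * Real.cosh (b / r), Real.sinh (a / r) * Real.sinh (b / r),
    Real.cosh (a / r))

/-- `ψ_v(u,v)`. -/
def psiV (r a b : ℝ) : ℝ × ℝ × ℝ :=
  (Real.cosh (a / r) * Real.sinh (b / r), Real.cosh (a / r) * Real.cosh (b / r), 0)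

/-- Unit normal of `γ(t) = ψ(u(t), v(t))` in `H²(r)`:
`n = (1/‖γ̇‖)(−v̇ cosh(u/r) ψ_u + (u̇ / cosh(u/r)) ψ_v)`. -/
def unitNormal (r : ℝ) (u v : ℝ → ℝ) (t : ℝ) : ℝ × ℝ × ℝ :=
  (speedSG r u v t)⁻¹ •
    ((-(deriv v t * Real.cosh (u t / r))) • psiU r (u t) (v t)
      + (deriv u t / Real.cosh (u t / r)) • psiV r (u t) (v t))

/-!
Everything is computed in the frame `ψ_u, ψ_v` along `γ = ψ(u, v)`, which is orthogonal with
`⟨ψ_u, ψ_u⟩₁ = 1`, `⟨ψ_v, ψ_v⟩₁ = cosh²(u/r)`. The velocity is `u̇ ψ_u + v̇ ψ_v` and the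
acceleration is `(‖γ̇‖²/r²) γ` plus a combination of `ψ_u, ψ_v`, so the triple product defining
`κ` reduces to `det(γ, ψ_u, ψ_v) = −r cosh(u/r)`.

If `E₁, E₂` are the residuals of the two Euler–Lagrange equations, then `u̇ E₁ + v̇ E₂ = 0`
identically (the functional is invariant under reparametrization), while
`−v̇ cosh²(u/r) E₁ + u̇ E₂ = cosh(u/r) ‖γ̇‖² f (κ + ⟨n, ∇f⟩₁ / f)`. These two combinations have
determinant `‖γ̇‖² > 0`, so the system is equivalent to the single normal equation.
-/
theorem eq_zero_and_eq_zero_iff_of_det_ne_zero {a b p q x y : ℝ} (hdet : a * q - b * p ≠ 0)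
    (h : a * x + b * y = 0) : x = 0 ∧ y = 0 ↔ p * x + q * y = 0 := by
  refine ⟨fun ⟨hx, hy⟩ => by rw [hx, hy]; ring, fun h' => ⟨?_, ?_⟩⟩
  · apply (mul_eq_zero.mp _).resolve_left hdet
    linear_combination q * h - b * h'
  · apply (mul_eq_zero.mp _).resolve_left hdet
    linear_combination a * h' - p * h

theorem hasDerivAt_uncurry_comp {f : ℝ → ℝ → ℝ} {u v : ℝ → ℝ} {u' v' t : ℝ}
    (hf : DifferentiableAt ℝ (Function.uncurry f) (u t, v t))
    (hu : HasDerivAt u u' t) (hv : HasDerivAt v v' t) :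
    HasDerivAt (fun s => f (u s) (v s))
      (deriv (fun a => f a (v t)) (u t) * u' + deriv (fun b => f (u t) b) (v t) * v') t := by
  set L := fderiv ℝ (Function.uncurry f) (u t, v t)
  have hL := hf.hasFDerivAt
  have hfu : HasDerivAt (fun a => f a (v t)) (L (1, 0)) (u t) :=
    (hL.comp_hasDerivAt (u t) ((hasDerivAt_id (u t)).prodMk (hasDerivAt_const (u t) (v t))) :)
  have hfv : HasDerivAt (fun b => f (u t) b) (L (0, 1)) (v t) :=
    (hL.comp_hasDerivAt (v t) ((hasDerivAt_const (v t) (u t)).prodMk (hasDerivAt_id (v t))) :)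
  have hsplit : (u', v') = u' • ((1 : ℝ), (0 : ℝ)) + v' • ((0 : ℝ), (1 : ℝ)) := by simp
  rw [hfu.deriv, hfv.deriv, mul_comm, mul_comm _ v', ← smul_eq_mul, ← smul_eq_mul, ← map_smul,
    ← map_smul, ← map_add, ← hsplit]
  exact hL.comp_hasDerivAt t (hu.prodMk hv)

def psi (r a b : ℝ) : ℝ × ℝ × ℝ :=
  (r * cosh (a / r) * cosh (b / r), r * cosh (a / r) * sinh (b / r), r * sinh (a / r))

def tripleProduct (X Y Z : ℝ × ℝ × ℝ) : ℝ :=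
  X.1 * (Y.2.1 * Z.2.2 - Y.2.2 * Z.2.1) - X.2.1 * (Y.1 * Z.2.2 - Y.2.2 * Z.1)
    + X.2.2 * (Y.1 * Z.2.1 - Y.2.1 * Z.1)

theorem tripleProduct_smul_add_smul (X Y Z : ℝ × ℝ × ℝ) (a b k p q : ℝ) :
    tripleProduct X (a • Y + b • Z) (k • X + p • Y + q • Z)
      = (a * q - b * p) * tripleProduct X Y Z := by
  simp only [tripleProduct, Prod.fst_add, Prod.snd_add, Prod.smul_fst, Prod.smul_snd, smul_eq_mul]
  ring

theorem mink3_smul_left (k : ℝ) (X Y : ℝ × ℝ × ℝ) : mink3 (k • X) Y = k * mink3 X Y := by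
  simp only [mink3, Prod.smul_fst, Prod.smul_snd, smul_eq_mul]
  ring

theorem kappaH2_eq_tripleProduct (r : ℝ) (x y z : ℝ → ℝ) (t : ℝ) :
    kappaH2 r x y z t
      = tripleProduct (x t, y t, z t) (deriv x t, deriv y t, deriv z t)
          (deriv (deriv x) t, deriv (deriv y) t, deriv (deriv z) t) / (r * speed3 x y z t ^ 3) := by
  unfold kappaH2 tripleProduct
  ring

theorem speed3_eq_sqrt_mink3 (x y z : ℝ → ℝ) (t : ℝ) :
    speed3 x y z t
      = √(mink3 (deriv x t, deriv y t, deriv z t) (deriv x t, deriv y t, deriv z t)) := by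
  unfold speed3 mink3
  ring_nf

section SemiGeodesicFrame

variable (r a b : ℝ)

theorem mink3_psiU_psiV_combination (p q p' q' : ℝ) :
    mink3 (p • psiU r a b + q • psiV r a b) (p' • psiU r a b + q' • psiV r a b)
      = p * p' + cosh (a / r) ^ 2 * q * q' := by
  simp only [mink3, psiU, psiV, Prod.fst_add, Prod.snd_add, Prod.smul_fst, Prod.smul_snd,
    smul_eq_mul]
  linear_combination (q * q' * cosh (a / r) ^ 2 - p * p' * sinh (a / r) ^ 2)
    * cosh_sq_sub_sinh_sq (b / r) + p * p' * cosh_sq_sub_sinh_sq (a / r)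

theorem tripleProduct_psi_psiU_psiV :
    tripleProduct (psi r a b) (psiU r a b) (psiV r a b) = -(r * cosh (a / r)) := by
  simp only [tripleProduct, psi, psiU, psiV]
  linear_combination (r * cosh (a / r) * (sinh (a / r) ^ 2 - cosh (a / r) ^ 2))
    * cosh_sq_sub_sinh_sq (b / r) - r * cosh (a / r) * cosh_sq_sub_sinh_sq (a / r)

end SemiGeodesicFrame

section SemiGeodesicCurve

variable {r : ℝ} {u v : ℝ → ℝ}

theorem hasDerivAt_gX (hr : r ≠ 0) {A B t : ℝ} (hu : HasDerivAt u A t) (hv : HasDerivAt v B t) :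
    HasDerivAt (gX r u v)
      (A * sinh (u t / r) * cosh (v t / r) + B * cosh (u t / r) * sinh (v t / r)) t := by
  refine ((((hu.div_const r).cosh).const_mul r).mul (hv.div_const r).cosh).congr_deriv ?_
  field_simp

theorem hasDerivAt_gY (hr : r ≠ 0) {A B t : ℝ} (hu : HasDerivAt u A t) (hv : HasDerivAt v B t) :
    HasDerivAt (gY r u v)
      (A * sinh (u t / r) * sinh (v t / r) + B * cosh (u t / r) * cosh (v t / r)) t := by
  refine ((((hu.div_const r).cosh).const_mul r).mul (hv.div_const r).sinh).congr_deriv ?_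
  field_simp

theorem hasDerivAt_gZ (hr : r ≠ 0) {A t : ℝ} (hu : HasDerivAt u A t) :
    HasDerivAt (gZ r u v) (A * cosh (u t / r)) t := by
  refine (((hu.div_const r).sinh).const_mul r).congr_deriv ?_
  field_simp

theorem deriv_gX_gY_gZ (hr : r ≠ 0) (hu : Differentiable ℝ u) (hv : Differentiable ℝ v) (t : ℝ) :
    (deriv (gX r u v) t, deriv (gY r u v) t, deriv (gZ r u v) t)
      = deriv u t • psiU r (u t) (v t) + deriv v t • psiV r (u t) (v t) := by
  rw [(hasDerivAt_gX hr (hu t).hasDerivAt (hv t).hasDerivAt).deriv,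
    (hasDerivAt_gY hr (hu t).hasDerivAt (hv t).hasDerivAt).deriv,
    (hasDerivAt_gZ (v := v) hr (hu t).hasDerivAt).deriv]
  simp only [psiU, psiV, Prod.smul_mk, Prod.mk_add_mk, smul_eq_mul]
  ring_nf

theorem deriv_deriv_gX_gY_gZ (hr : r ≠ 0) (hu : Differentiable ℝ u)
    (hu2 : Differentiable ℝ (deriv u)) (hv : Differentiable ℝ v) (hv2 : Differentiable ℝ (deriv v)) (t : ℝ) :
    (deriv (deriv (gX r u v)) t, deriv (deriv (gY r u v)) t, deriv (deriv (gZ r u v)) t)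
      = ((deriv u t ^ 2 + cosh (u t / r) ^ 2 * deriv v t ^ 2) / r ^ 2) • psi r (u t) (v t)
        + (deriv (deriv u) t - cosh (u t / r) * sinh (u t / r) * deriv v t ^ 2 / r)
          • psiU r (u t) (v t)
        + (deriv (deriv v) t + 2 * deriv u t * deriv v t * sinh (u t / r) / (r * cosh (u t / r)))
          • psiV r (u t) (v t) := by
  have hX : deriv (gX r u v) = fun s =>
      deriv u s * sinh (u s / r) * cosh (v s / r) + deriv v s * cosh (u s / r) * sinh (v s / r) :=
    funext fun s => (hasDerivAt_gX hr (hu s).hasDerivAt (hv s).hasDerivAt).deriv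
  have hY : deriv (gY r u v) = fun s =>
      deriv u s * sinh (u s / r) * sinh (v s / r) + deriv v s * cosh (u s / r) * cosh (v s / r) :=
    funext fun s => (hasDerivAt_gY hr (hu s).hasDerivAt (hv s).hasDerivAt).deriv
  have hZ : deriv (gZ r u v) = fun s => deriv u s * cosh (u s / r) :=
    funext fun s => (hasDerivAt_gZ hr (hu s).hasDerivAt).deriv
  have hU := (hu t).hasDerivAt.div_const r
  have hV := (hv t).hasDerivAt.div_const r
  have hA := (hu2 t).hasDerivAt
  have hB := (hv2 t).hasDerivAt
  have dX : HasDerivAt (fun s => deriv u s * sinh (u s / r) * cosh (v s / r)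
      + deriv v s * cosh (u s / r) * sinh (v s / r)) _ t :=
    ((hA.mul hU.sinh).mul hV.cosh).add ((hB.mul hU.cosh).mul hV.sinh)
  have dY : HasDerivAt (fun s => deriv u s * sinh (u s / r) * sinh (v s / r)
      + deriv v s * cosh (u s / r) * cosh (v s / r)) _ t :=
    ((hA.mul hU.sinh).mul hV.sinh).add ((hB.mul hU.cosh).mul hV.cosh)
  have dZ : HasDerivAt (fun s => deriv u s * cosh (u s / r)) _ t := hA.mul hU.cosh
  rw [hX, hY, hZ, dX.deriv, dY.deriv, dZ.deriv]
  simp only [psi, psiU, psiV, Prod.smul_mk, Prod.mk_add_mk, smul_eq_mul, Prod.mk.injEq,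
    Pi.mul_apply]
  refine ⟨?_, ?_, ?_⟩
  · field_simp
    linear_combination (-(cosh (u t / r) * cosh (v t / r) * deriv v t ^ 2))
      * cosh_sq_sub_sinh_sq (u t / r)
  · field_simp
    linear_combination (-(cosh (u t / r) * sinh (v t / r) * deriv v t ^ 2))
      * cosh_sq_sub_sinh_sq (u t / r)
  · field_simp
    ring

end SemiGeodesicCurve

section SemiGeodesicCurvature

variable {r : ℝ} {u v : ℝ → ℝ}

theorem speed3_gX_gY_gZ (hr : r ≠ 0) (hu : Differentiable ℝ u) (hv : Differentiable ℝ v) (t : ℝ) :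
    speed3 (gX r u v) (gY r u v) (gZ r u v) t = speedSG r u v t := by
  rw [speed3_eq_sqrt_mink3, deriv_gX_gY_gZ hr hu hv, mink3_psiU_psiV_combination, speedSG]
  ring_nf

theorem kappaSG_eq (hr : r ≠ 0) (hu : Differentiable ℝ u) (hu2 : Differentiable ℝ (deriv u))
    (hv : Differentiable ℝ v) (hv2 : Differentiable ℝ (deriv v)) (t : ℝ) :
    kappaSG r u v t
      = (r * cosh (u t / r) * (deriv (deriv u) t * deriv v t - deriv u t * deriv (deriv v) t)
          - sinh (u t / r) * deriv v t
            * (cosh (u t / r) ^ 2 * deriv v t ^ 2 + 2 * deriv u t ^ 2))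
        / (r * speedSG r u v t ^ 3) := by
  have hpos : (gX r u v t, gY r u v t, gZ r u v t) = psi r (u t) (v t) := rfl
  rw [kappaSG, kappaH2_eq_tripleProduct, speed3_gX_gY_gZ hr hu hv, hpos, deriv_gX_gY_gZ hr hu hv,
    deriv_deriv_gX_gY_gZ hr hu hu2 hv hv2, tripleProduct_smul_add_smul, tripleProduct_psi_psiU_psiV]
  field_simp
  ring

theorem neg_mink3_unitNormal_div (t p q F : ℝ) :
    -mink3 (unitNormal r u v t)
        (p • psiU r (u t) (v t) + (q / cosh (u t / r) ^ 2) • psiV r (u t) (v t)) / F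
      = (deriv v t * cosh (u t / r) ^ 2 * p - deriv u t * q)
        / (cosh (u t / r) * speedSG r u v t * F) := by
  rw [unitNormal, mink3_smul_left, mink3_psiU_psiV_combination]
  field_simp
  ring

end SemiGeodesicCurvature

theorem eulerLagrange_residual_iff {r A B A' B' s c F Fu Fv w : ℝ} (hr : r ≠ 0) (hc : c ≠ 0)
    (hF : F ≠ 0) (hw : w ≠ 0) (hw2 : w ^ 2 = A ^ 2 + c ^ 2 * B ^ 2) :
    (Fu * w + F * s * c * B ^ 2 / (r * w)
        = (((Fu * A + Fv * B) * A + F * A') * w ^ 2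
            - F * A * (A * A' + c * s * A * B ^ 2 / r + c ^ 2 * B * B')) / w ^ 3
      ∧ Fv * w
        = ((((Fu * A + Fv * B) * B + F * B') * c ^ 2 + 2 * F * B * c * s * A / r) * w ^ 2
            - F * B * c ^ 2 * (A * A' + c * s * A * B ^ 2 / r + c ^ 2 * B * B')) / w ^ 3)
      ↔ (r * c * (A' * B - A * B') - s * B * (c ^ 2 * B ^ 2 + 2 * A ^ 2)) / (r * w ^ 3)
          = (B * c ^ 2 * Fu - A * Fv) / (c * w * F) := by
  set E₁ := Fu * w + F * s * c * B ^ 2 / (r * w)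
    - (((Fu * A + Fv * B) * A + F * A') * w ^ 2
      - F * A * (A * A' + c * s * A * B ^ 2 / r + c ^ 2 * B * B')) / w ^ 3
  set E₂ := Fv * w
    - ((((Fu * A + Fv * B) * B + F * B') * c ^ 2 + 2 * F * B * c * s * A / r) * w ^ 2
      - F * B * c ^ 2 * (A * A' + c * s * A * B ^ 2 / r + c ^ 2 * B * B')) / w ^ 3
  have htan : A * E₁ + B * E₂ = 0 := by
    simp only [E₁, E₂]
    field_simp
    linear_combination (w ^ 2 * r * (A * Fu + B * Fv)
      - F * (r * A * A' + s * c * A * B ^ 2 + c ^ 2 * r * B * B')) * hw2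
  have hnor : -(B * c ^ 2) * E₁ + A * E₂
      = c * w ^ 2 * F * ((r * c * (A' * B - A * B') - s * B * (c ^ 2 * B ^ 2 + 2 * A ^ 2))
          / (r * w ^ 3) - (B * c ^ 2 * Fu - A * Fv) / (c * w * F)) := by
    simp only [E₁, E₂]
    field_simp
    ring
  have hdet : A * A - B * -(B * c ^ 2) ≠ 0 :=
    (show w ^ 2 = A * A - B * -(B * c ^ 2) by rw [hw2]; ring) ▸ pow_ne_zero 2 hw
  rw [← sub_eq_zero, ← sub_eq_zero (a := Fv * w), eq_zero_and_eq_zero_iff_of_det_ne_zero hdet htan,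
    hnor, ← sub_eq_zero (a := (r * c * _ - _) / _)]
  simp [hc, hw, hF]

section EulerLagrange

variable {r : ℝ} {u v : ℝ → ℝ} {t : ℝ}

theorem speedSG_sq :
    speedSG r u v t ^ 2 = deriv u t ^ 2 + cosh (u t / r) ^ 2 * deriv v t ^ 2 :=
  sq_sqrt (by positivity)

theorem speedSG_pos (hreg : (deriv u t, deriv v t) ≠ (0, 0)) : 0 < speedSG r u v t := by
  refine sqrt_pos.mpr ?_
  rcases eq_or_ne (deriv v t) 0 with hB | hB
  · have hA : deriv u t ≠ 0 := fun hA => hreg (by rw [hA, hB])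
    rw [hB]
    positivity
  · have := cosh_pos (u t / r)
    positivity

theorem hasDerivAt_speedSG (hu : DifferentiableAt ℝ u t) (hu2 : DifferentiableAt ℝ (deriv u) t)
    (hv2 : DifferentiableAt ℝ (deriv v) t) (hw : speedSG r u v t ≠ 0) :
    HasDerivAt (speedSG r u v)
      ((deriv u t * deriv (deriv u) t
        + cosh (u t / r) * sinh (u t / r) * deriv u t * deriv v t ^ 2 / r
        + cosh (u t / r) ^ 2 * deriv v t * deriv (deriv v) t) / speedSG r u v t) t := by
  have hQ : HasDerivAt (fun s => deriv u s ^ 2 + cosh (u s / r) ^ 2 * deriv v s ^ 2)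
      (2 * (deriv u t * deriv (deriv u) t
        + cosh (u t / r) * sinh (u t / r) * deriv u t * deriv v t ^ 2 / r
        + cosh (u t / r) ^ 2 * deriv v t * deriv (deriv v) t)) t := by
    refine ((hu2.hasDerivAt.pow 2).add
      (((hu.hasDerivAt.div_const r).cosh.pow 2).mul (hv2.hasDerivAt.pow 2))).congr_deriv ?_
    simp only [Pi.pow_apply]
    ring
  refine (hQ.sqrt fun h => hw ?_).congr_deriv ?_
  · rw [speedSG, h, sqrt_zero]
  · rw [← speedSG]
    field_simp

theorem eulerLagrange_at_iff (hr : r ≠ 0) {f : ℝ → ℝ → ℝ}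
    (hf : DifferentiableAt ℝ (Function.uncurry f) (u t, v t)) (hF : f (u t) (v t) ≠ 0)
    (hu : Differentiable ℝ u) (hu2 : Differentiable ℝ (deriv u))
    (hv : Differentiable ℝ v) (hv2 : Differentiable ℝ (deriv v))
    (hreg : (deriv u t, deriv v t) ≠ (0, 0)) :
    (deriv (fun a => f a (v t)) (u t) * speedSG r u v t
        + f (u t) (v t) * sinh (u t / r) * cosh (u t / r) * deriv v t ^ 2 / (r * speedSG r u v t)
      = deriv (fun s => f (u s) (v s) * deriv u s / speedSG r u v s) t
    ∧ deriv (fun b => f (u t) b) (v t) * speedSG r u v t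
      = deriv (fun s => f (u s) (v s) * deriv v s * cosh (u s / r) ^ 2 / speedSG r u v s) t)
      ↔ kappaSG r u v t
          = -mink3 (unitNormal r u v t)
                (deriv (fun a => f a (v t)) (u t) • psiU r (u t) (v t)
                  + (deriv (fun b => f (u t) b) (v t) / cosh (u t / r) ^ 2) • psiV r (u t) (v t))
            / f (u t) (v t) := by
  have hw := (speedSG_pos (r := r) hreg).ne'
  have hc : cosh (u t / r) ≠ 0 := (cosh_pos _).ne'
  have hf' := hasDerivAt_uncurry_comp hf (hu t).hasDerivAt (hv t).hasDerivAt
  have hW := hasDerivAt_speedSG (hu t) (hu2 t) (hv2 t) hw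
  have hC : HasDerivAt (fun s => cosh (u s / r) ^ 2)
      (2 * cosh (u t / r) * sinh (u t / r) * deriv u t / r) t :=
    ((hu t).hasDerivAt.div_const r).cosh.pow 2 |>.congr_deriv (by ring)
  have hM₁ : HasDerivAt (fun s => f (u s) (v s) * deriv u s / speedSG r u v s) _ t :=
    (hf'.mul (hu2 t).hasDerivAt).div hW hw
  have hM₂ : HasDerivAt
      (fun s => f (u s) (v s) * deriv v s * cosh (u s / r) ^ 2 / speedSG r u v s) _ t :=
    ((hf'.mul (hv2 t).hasDerivAt).mul hC).div hW hw
  rw [hM₁.deriv, hM₂.deriv, kappaSG_eq hr hu hu2 hv hv2, neg_mink3_unitNormal_div]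
  convert eulerLagrange_residual_iff hr hc hF hw speedSG_sq using 3 <;>
  · simp only [Pi.mul_apply]
    field_simp

end EulerLagrange

/-- Euler–Lagrange equations iff `κ = −⟨n, ∇f⟩₁ / f`. -/
theorem eulerLagrange_iff_normal_gradient (r : ℝ) (hr : 0 < r) (f : ℝ → ℝ → ℝ)
    (hf : ContDiff ℝ 2 (Function.uncurry f)) (hfpos : ∀ a b : ℝ, 0 < f a b)
    (u v : ℝ → ℝ)
    (hu : Differentiable ℝ u) (hu2 : Differentiable ℝ (deriv u))
    (hv : Differentiable ℝ v) (hv2 : Differentiable ℝ (deriv v))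
    (hreg : ∀ t : ℝ, (deriv u t, deriv v t) ≠ (0, 0)) :
    EulerLagrange r f u v ↔
      ∀ t : ℝ,
        kappaSG r u v t
          = -(mink3 (unitNormal r u v t)
                ((deriv (fun a => f a (v t)) (u t)) • psiU r (u t) (v t)
                  + (deriv (fun b => f (u t) b) (v t) / (Real.cosh (u t / r)) ^ 2) •
                    psiV r (u t) (v t)))
            / f (u t) (v t) := by
  have hf' : Differentiable ℝ (Function.uncurry f) := hf.differentiable two_ne_zero
  exact forall_congr' fun t =>
    eulerLagrange_at_iff hr.ne' (hf' _) (hfpos _ _).ne' hu hu2 hv hv2 (hreg t)
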